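/- Let λ₁, …, λ_N be positive reals with partial sums Λ_i = λ₁ + ⋯ + λ_i, let m > 0 and μ > 0, and suppose every service-time Laplace–Stieltjes transform is that of the exponential distribution with rate μ, i.e. β_j(s) = μ/(μ + s) for all j and s > 0. Define d_j and g_j recursively by g_i = (1/Λ_i) Σ_{j=1}^{i} λ_j d_j and d_j = (1 − β_j(Λ_j/m))(1/Λ_j + g_j). Then for every i = 1, …, N one has g_i = 1/(m μ) and d_i = 1/(m μ). (This is the computation underlying the paper's exactness claim in the exponential case, Case 2 of Section 3.) -/

import Mathlib

open Finset

/-! With `c = mμ`, the factor `1 − β(Λ/m)` equals `Λ/(c + Λ)`, so the recursion for `d_i` reads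
`(c + Λ_i) d_i = 1 + Λ_i g_i`. Once `d_j = 1/c` for `j < i`, the recursion for `g_i` gives
`Λ_i g_i = Λ_{i-1}/c + λ_i d_i`; substituting yields `(c + Λ_{i-1}) d_i = (c + Λ_{i-1})/c`, hence
`d_i = 1/c` and then `g_i = 1/c`. -/

lemma one_sub_div_add_div_eq {m mu L : ℝ} (hm : m ≠ 0) (hden : m * mu + L ≠ 0) :
    1 - mu / (mu + L / m) = L / (m * mu + L) := by
  have h : mu + L / m = (m * mu + L) / m := by field_simp
  rw [h, div_div_eq_mul_div, eq_div_iff hden, sub_mul, div_mul_cancel₀ _ hden]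
  ring

lemma exponential_busy_period_step {m mu L' l d g : ℝ} (hm : 0 < m) (hmu : 0 < mu)
    (hL' : 0 ≤ L') (hl : 0 < l)
    (hd : d = (1 - mu / (mu + (L' + l) / m)) * (1 / (L' + l) + g))
    (hg : g = 1 / (L' + l) * (L' / (m * mu) + l * d)) :
    d = 1 / (m * mu) ∧ g = 1 / (m * mu) := by
  have hc : 0 < m * mu := mul_pos hm hmu
  have hL : 0 < L' + l := by positivity
  rw [one_sub_div_add_div_eq hm.ne' (by positivity)] at hd
  have hdL : (m * mu + (L' + l)) * d = 1 + (L' + l) * g := by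
    rw [hd]; field_simp
  have hgL : (L' + l) * g = L' / (m * mu) + l * d := by
    rw [hg]; field_simp
  have hd' : d = 1 / (m * mu) := by
    have h : (m * mu + L') * d = 1 + L' / (m * mu) := by linear_combination hdL + hgL
    refine mul_left_cancel₀ (by positivity : m * mu + L' ≠ 0) ?_
    rw [h]; field_simp
  refine ⟨hd', mul_left_cancel₀ hL.ne' ?_⟩
  rw [hgL, hd']; ring

/-- Exponential case (Case 2 of Section 3): if every service-time
Laplace–Stieltjes transform is `β_j(s) = μ/(μ + s)` (exponential with rate `μ`)
and `d_j`, `g_i` satisfy the recursions `d_j = (1 − β_j(Λ_j/m))(1/Λ_j + g_j)`,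
`g_i = (1/Λ_i) ∑_{j=1}^i λ_j d_j`, then `g_i = d_i = 1/(mμ)` for all `i = 1, …, N`. -/
theorem exponential_case_busy_period
    (N : ℕ) (lam : ℕ → ℝ) (m mu : ℝ)
    (hm : 0 < m) (hmu : 0 < mu)
    (hlam : ∀ j, 1 ≤ j → j ≤ N → 0 < lam j)
    (Lam : ℕ → ℝ) (hLam : ∀ j, Lam j = ∑ k ∈ Icc 1 j, lam k)
    (d g : ℕ → ℝ)
    (hd : ∀ j, 1 ≤ j → j ≤ N →
      d j = (1 - mu / (mu + Lam j / m)) * (1 / Lam j + g j))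
    (hg : ∀ i, 1 ≤ i → i ≤ N →
      g i = (1 / Lam i) * ∑ j ∈ Icc 1 i, lam j * d j) :
    ∀ i, 1 ≤ i → i ≤ N → g i = 1 / (m * mu) ∧ d i = 1 / (m * mu) := by
  intro i
  induction i using Nat.strong_induction_on with
  | _ i IH =>
    intro hi hiN
    obtain ⟨k, rfl⟩ : ∃ k, i = k + 1 := ⟨i - 1, by omega⟩
    have hLk : 0 ≤ Lam k := hLam k ▸ sum_nonneg fun j hj => by
      obtain ⟨hj1, hjk⟩ := mem_Icc.1 hj
      exact (hlam j hj1 (by omega)).le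
    have hLsucc : Lam (k + 1) = Lam k + lam (k + 1) := by
      rw [hLam, hLam, sum_Icc_succ_top hi]
    have hsum : ∑ j ∈ Icc 1 (k + 1), lam j * d j = Lam k / (m * mu) + lam (k + 1) * d (k + 1) := by
      rw [sum_Icc_succ_top hi, hLam, sum_div]
      congr 1
      refine sum_congr rfl fun j hj => ?_
      obtain ⟨hj1, hjk⟩ := mem_Icc.1 hj
      rw [(IH j (by omega) hj1 (by omega)).2, mul_one_div]
    obtain ⟨hdk, hgk⟩ := exponential_busy_period_step hm hmu hLk (hlam (k + 1) hi hiN)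
      (hLsucc ▸ hd (k + 1) hi hiN) (by rw [hg (k + 1) hi hiN, hsum, hLsucc])
    exact ⟨hgk, hdk⟩
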